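/- Let A be a finite alphabet and X an infinite word over A that is not eventually periodic. Then the subshift of X — the set of all infinite words Y over A every factor of which is a factor of X — is uncountable. -/
import Mathlib

/-- `v` occurs as a factor of the infinite word `X` starting at position `k`. -/
def IsFactorAt {A : Type*} (X : ℕ → A) (v : List A) (k : ℕ) : Prop :=
  v = (List.range v.length).map (fun i => X (k + i))

/-- `v` is a factor of the infinite word `X`. -/
def IsFactor {A : Type*} (X : ℕ → A) (v : List A) : Prop :=
  ∃ k, IsFactorAt X v k

/-- `X` is eventually periodic. -/
def EventuallyPeriodic {A : Type*} (X : ℕ → A) : Prop :=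
  ∃ p ≥ 1, ∃ K, ∀ i ≥ K, X (i + p) = X i

/-- `X` is uniformly recurrent: every factor occurs with bounded gaps. -/
def UniformlyRecurrent {A : Type*} (X : ℕ → A) : Prop :=
  ∀ v : List A, IsFactor X v → ∃ B, ∀ k, ∃ j, k ≤ j ∧ j ≤ k + B ∧ IsFactorAt X v j

namespace Stmt8Aux

variable {A : Type*}

/-- Splitting property: from position `k` one can find another position `k'` where `X` agrees
with position `k` for `n` steps but eventually disagrees. -/
def SplitProp (X : ℕ → A) : Prop :=
  ∀ k n : ℕ, ∃ k' j : ℕ, (∀ i < n, X (k' + i) = X (k + i)) ∧ X (k' + j) ≠ X (k + j)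

/-- The node of the binary tree indexed by a (reversed) list of bits: a position and a length. -/
noncomputable def node (X : ℕ → A) (h : SplitProp X) : List Bool → ℕ × ℕ
  | [] => (0, 0)
  | b :: s =>
    let p := node X h s
    let k' := (h p.1 p.2).choose
    let j := (h p.1 p.2).choose_spec.choose
    (if b then k' else p.1, p.2 + j + 1)

lemma node_len_ge (X : ℕ → A) (h : SplitProp X) (s : List Bool) :
    s.length ≤ (node X h s).2 := by
  induction s with
  | nil => simp [node]
  | cons b s ih =>
    simp only [node, List.length_cons]
    omega

lemma node_len_le_cons (X : ℕ → A) (h : SplitProp X) (b : Bool) (s : List Bool) :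
    (node X h s).2 ≤ (node X h (b :: s)).2 := by
  simp only [node]
  omega

lemma node_agree_cons (X : ℕ → A) (h : SplitProp X) (b : Bool) (s : List Bool) :
    ∀ i < (node X h s).2, X ((node X h (b :: s)).1 + i) = X ((node X h s).1 + i) := by
  intro i hi
  have hspec := (h (node X h s).1 (node X h s).2).choose_spec.choose_spec
  cases b with
  | false => simp [node]
  | true =>
    simp only [node, if_true]
    exact hspec.1 i hi

lemma node_len_le_append (X : ℕ → A) (h : SplitProp X) (t s : List Bool) :
    (node X h s).2 ≤ (node X h (t ++ s)).2 := by
  induction t with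
  | nil => simp
  | cons b t ih =>
    calc (node X h s).2 ≤ (node X h (t ++ s)).2 := ih
      _ ≤ (node X h (b :: (t ++ s))).2 := node_len_le_cons X h b _

lemma node_agree_append (X : ℕ → A) (h : SplitProp X) (t s : List Bool) :
    ∀ i < (node X h s).2, X ((node X h (t ++ s)).1 + i) = X ((node X h s).1 + i) := by
  induction t with
  | nil => intro i _; rfl
  | cons b t ih =>
    intro i hi
    have h1 : X ((node X h (b :: (t ++ s))).1 + i) = X ((node X h (t ++ s)).1 + i) :=
      node_agree_cons X h b (t ++ s) i (lt_of_lt_of_le hi (node_len_le_append X h t s))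
    rw [List.cons_append, h1, ih i hi]

lemma node_sibling (X : ℕ → A) (h : SplitProp X) (s : List Bool) :
    ∃ j, j < (node X h (true :: s)).2 ∧
      (node X h (true :: s)).2 = (node X h (false :: s)).2 ∧
      X ((node X h (true :: s)).1 + j) ≠ X ((node X h (false :: s)).1 + j) := by
  have hspec := (h (node X h s).1 (node X h s).2).choose_spec.choose_spec
  refine ⟨(h (node X h s).1 (node X h s).2).choose_spec.choose, ?_, ?_, ?_⟩
  · simp only [node]; omega
  · simp only [node]
  · simp only [node, if_true, if_false]
    exact hspec.2

/-- The prefix of length `m` of a bit sequence, as a reversed list. -/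
def pre (b : ℕ → Bool) (m : ℕ) : List Bool := ((List.range m).reverse).map b

lemma pre_succ (b : ℕ → Bool) (m : ℕ) : pre b (m + 1) = b m :: pre b m := by
  simp [pre, List.range_succ]

lemma pre_length (b : ℕ → Bool) (m : ℕ) : (pre b m).length = m := by
  simp [pre]

lemma pre_append (b : ℕ → Bool) {m m' : ℕ} (hm : m ≤ m') :
    ∃ t, pre b m' = t ++ pre b m := by
  induction m' with
  | zero =>
    have hm0 : m = 0 := by omega
    exact ⟨[], by simp [hm0]⟩
  | succ n ih =>
    rcases Nat.lt_or_ge m (n + 1) with hlt | hge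
    · obtain ⟨t, ht⟩ := ih (by omega)
      exact ⟨b n :: t, by rw [pre_succ, ht]; rfl⟩
    · have : m = n + 1 := by omega
      exact ⟨[], by rw [this]; rfl⟩

lemma pre_congr {b b' : ℕ → Bool} {m : ℕ} (hbb : ∀ i < m, b i = b' i) :
    pre b m = pre b' m := by
  apply List.map_congr_left
  intro i hi
  exact hbb i (by simpa using hi)

/-- The injection from bit sequences into the subshift. -/
noncomputable def F (X : ℕ → A) (h : SplitProp X) (b : ℕ → Bool) (i : ℕ) : A :=
  X ((node X h (pre b (i + 1))).1 + i)

lemma F_stab (X : ℕ → A) (h : SplitProp X) (b : ℕ → Bool) (i m : ℕ) (hm : i + 1 ≤ m) :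
    F X h b i = X ((node X h (pre b m)).1 + i) := by
  obtain ⟨t, ht⟩ := pre_append b hm
  have hi : i < (node X h (pre b (i + 1))).2 := by
    have := node_len_ge X h (pre b (i + 1))
    rw [pre_length] at this
    omega
  rw [F, ht, node_agree_append X h t _ i hi]

end Stmt8Aux

theorem stmt8 {A : Type*} [Finite A] (X : ℕ → A)
    (hX : ¬ EventuallyPeriodic X) (hrec : UniformlyRecurrent X) :
    ¬ Set.Countable {Y : ℕ → A | ∀ v : List A, IsFactor Y v → IsFactor X v} := by
  intro hcount
  open Stmt8Aux in
  -- the splitting property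
  have hsplit : SplitProp X := by
    intro k n
    by_contra hcon
    push_neg at hcon
    have hall : ∀ k' : ℕ, (∀ i < n, X (k' + i) = X (k + i)) → ∀ j, X (k' + j) = X (k + j) :=
      fun k' hk' j => hcon k' j hk'
    set w : List A := (List.range n).map (fun i => X (k + i)) with hw
    have hwlen : w.length = n := by simp [hw]
    have hwfac : IsFactor X w := ⟨k, by rw [IsFactorAt, hwlen]⟩
    obtain ⟨B, hB⟩ := hrec w hwfac
    have hocc : ∀ m : ℕ, ∃ j, m ≤ j ∧ ∀ i < n, X (j + i) = X (k + i) := by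
      intro m
      obtain ⟨j, hj1, _, hj3⟩ := hB m
      refine ⟨j, hj1, fun i hi => ?_⟩
      rw [IsFactorAt, hwlen] at hj3
      have h := congrArg (fun l : List A => l[i]?) hj3
      simp only [hw, List.getElem?_map, List.getElem?_range, hi, if_pos] at h
      simpa using h.symm
    obtain ⟨k1, _, hk1⟩ := hocc 0
    obtain ⟨k2, hk2le, hk2⟩ := hocc (k1 + 1)
    apply hX
    refine ⟨k2 - k1, by omega, k1, fun i hi => ?_⟩
    have e1 : ∀ j, X (k1 + j) = X (k + j) := hall k1 hk1
    have e2 : ∀ j, X (k2 + j) = X (k + j) := hall k2 hk2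
    have : i + (k2 - k1) = k2 + (i - k1) := by omega
    rw [this, e2, ← e1, Nat.add_sub_cancel' hi]
  -- the injection
  set S := {Y : ℕ → A | ∀ v : List A, IsFactor Y v → IsFactor X v} with hS
  have hmem : ∀ b : ℕ → Bool, F X hsplit b ∈ S := by
    intro b v ⟨kk, hkk⟩
    rw [IsFactorAt] at hkk
    refine ⟨(node X hsplit (pre b (kk + v.length))).1 + kk, ?_⟩
    rw [IsFactorAt]
    calc v = (List.range v.length).map (fun i => F X hsplit b (kk + i)) := hkk
      _ = (List.range v.length).map
            (fun i => X ((node X hsplit (pre b (kk + v.length))).1 + kk + i)) := by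
          apply List.map_congr_left
          intro i hi
          rw [List.mem_range] at hi
          rw [F_stab X hsplit b (kk + i) (kk + v.length) (by omega)]
          congr 1
          omega
  have hinj : Function.Injective (F X hsplit) := by
    intro b b' hbb'
    by_contra hne
    have hex : ∃ m, b m ≠ b' m := by
      by_contra hcon
      push_neg at hcon
      exact hne (funext hcon)
    set m := Nat.find hex with hm
    have hdiff : b m ≠ b' m := Nat.find_spec hex
    have hagree : ∀ i < m, b i = b' i := fun i hi =>
      not_ne_iff.mp (Nat.find_min hex (by omega))
    set s := pre b m with hsdef
    have hs' : pre b' m = s := (pre_congr (fun i hi => (hagree i hi).symm))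
    obtain ⟨j, hj1, hj2, hj3⟩ := node_sibling X hsplit s
    -- evaluate F b j and F b' j
    have key : ∀ (c : ℕ → Bool), pre c m = s → F X hsplit c j = X ((node X hsplit (c m :: s)).1 + j) := by
      intro c hcs
      have h1 : F X hsplit c j = X ((node X hsplit (pre c (max (j + 1) (m + 1)))).1 + j) :=
        F_stab X hsplit c j _ (le_max_left _ _)
      obtain ⟨t, ht⟩ := pre_append c (le_max_right (j + 1) (m + 1))
      rw [pre_succ, hcs] at ht
      have hjlt : j < (node X hsplit (c m :: s)).2 := by
        cases hc : c m
        · exact hj2 ▸ hj1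
        · exact hj1
      rw [h1, ht, node_agree_append X hsplit t _ j hjlt]
    have e1 : F X hsplit b j = X ((node X hsplit (b m :: s)).1 + j) := key b rfl
    have e2 : F X hsplit b' j = X ((node X hsplit (b' m :: s)).1 + j) := key b' hs'
    have : F X hsplit b j = F X hsplit b' j := by rw [hbb']
    rw [e1, e2] at this
    cases hb : b m <;> cases hb' : b' m
    · exact hdiff (by rw [hb, hb'])
    · rw [hb, hb'] at this; exact hj3 this.symm
    · rw [hb, hb'] at this; exact hj3 this
    · exact hdiff (by rw [hb, hb'])
  -- conclude
  have hpre : (F X hsplit ⁻¹' S).Countable := hcount.preimage hinj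
  have huniv : F X hsplit ⁻¹' S = Set.univ := by
    ext b; simp [hmem b]
  rw [huniv, Set.countable_univ_iff] at hpre
  obtain ⟨f, hf⟩ := exists_surjective_nat (ℕ → Bool)
  obtain ⟨n, hn⟩ := hf (fun n => !f n n)
  have := congrFun hn n
  simp at this
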